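/- Let D = (G, O, w) be a weighted oriented graph and let C be a basic 5-cycle of D. Then C has the ⋆-property if and only if |C ∩ V(C)| = 3 for every strong vertex cover C of D. -/

import Mathlib

/-! ## Weighted oriented graphs -/

/-- A weighted oriented graph `D = (G, 𝒪, w)`: an orientation of a finite simple
graph together with a weight function, where sources have weight `1`. -/
structure WOGraph (V : Type) where
  /-- the set of directed edges -/
  E : V → V → Prop
  irrefl : ∀ x, ¬ E x x
  asymm : ∀ x y, E x y → ¬ E y x
  /-- the weight function -/
  w : V → ℕ
  w_pos : ∀ x, 1 ≤ w x
  source_one : ∀ x, (∀ y, ¬ E y x) → w x = 1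

namespace WOGraph

variable {V : Type}

/-- The underlying simple graph `G` of `D`. -/
def graph (D : WOGraph V) : SimpleGraph V := SimpleGraph.fromRel D.E

/-- Out-neighbourhood `N⁺_D(x)`. -/
def outN (D : WOGraph V) (x : V) : Set V := {y | D.E x y}

/-- In-neighbourhood `N⁻_D(x)`. -/
def inN (D : WOGraph V) (x : V) : Set V := {y | D.E y x}

/-- Neighbourhood `N_D(x)`. -/
def nbr (D : WOGraph V) (x : V) : Set V := {y | D.E x y ∨ D.E y x}

/-- `N_D(A)` for a set `A` of vertices. -/
def nbrS (D : WOGraph V) (A : Set V) : Set V := {y | ∃ a ∈ A, y ∈ D.nbr a}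

/-- `N⁺_D(A)` for a set `A` of vertices. -/
def outNS (D : WOGraph V) (A : Set V) : Set V := {y | ∃ a ∈ A, D.E a y}

/-- `V⁺`, the set of vertices of weight `> 1`. -/
def Vplus (D : WOGraph V) : Set V := {x | 1 < D.w x}

/-- A vertex cover of `D`. -/
def IsVC (D : WOGraph V) (C : Set V) : Prop := ∀ u v, D.E u v → u ∈ C ∨ v ∈ C

/-- `L₁(C)`. -/
def L1 (D : WOGraph V) (C : Set V) : Set V := {x | x ∈ C ∧ ∃ y, D.E x y ∧ y ∉ C}

/-- `L₂(C)`. -/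
def L2 (D : WOGraph V) (C : Set V) : Set V :=
  {x | x ∈ C ∧ x ∉ D.L1 C ∧ ∃ y, D.E y x ∧ y ∉ C}

/-- `L₃(C)`. -/
def L3 (D : WOGraph V) (C : Set V) : Set V := {x | x ∈ C ∧ x ∉ D.L1 C ∧ x ∉ D.L2 C}

/-- A strong vertex cover of `D`. -/
def IsStrongVC (D : WOGraph V) (C : Set V) : Prop :=
  D.IsVC C ∧ ∀ x ∈ D.L3 C, ∃ y, D.E y x ∧ y ∈ C ∧ y ∉ D.L1 C ∧ 1 < D.w y

/-- A weighted oriented subgraph of `D`. -/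
structure OSub (D : WOGraph V) where
  verts : Set V
  E : V → V → Prop
  sub : ∀ u v, E u v → D.E u v
  memL : ∀ u v, E u v → u ∈ verts
  memR : ∀ u v, E u v → v ∈ verts

namespace OSub

variable {D : WOGraph V}

/-- The underlying simple graph of a weighted oriented subgraph. -/
def graph (H : D.OSub) : SimpleGraph V := SimpleGraph.fromRel H.E

/-- Neighbourhood inside the subgraph. -/
def nbr (H : D.OSub) (x : V) : Set V := {y | H.E x y ∨ H.E y x}

/-- Degree inside the subgraph. -/
noncomputable def deg (H : D.OSub) (x : V) : ℕ := (H.nbr x).ncard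

/-- `H` is contained in `K`. -/
def le (H K : D.OSub) : Prop := H.verts ⊆ K.verts ∧ ∀ u v, H.E u v → K.E u v

end OSub

/-- The induced weighted oriented subgraph on a set `A` of vertices. -/
def induced (D : WOGraph V) (A : Set V) : D.OSub where
  verts := A
  E u v := D.E u v ∧ u ∈ A ∧ v ∈ A
  sub _ _ h := h.1
  memL _ _ h := h.2.1
  memR _ _ h := h.2.2

/-- `K` is an induced weighted oriented subgraph of `D`. -/
def IsInducedSub {D : WOGraph V} (K : D.OSub) : Prop :=
  ∀ u v, D.E u v → u ∈ K.verts → v ∈ K.verts → K.E u v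

/-- A root oriented tree (ROT) with parent `v`. -/
def IsROT (D : WOGraph V) (T : D.OSub) (v : V) : Prop :=
  v ∈ T.verts ∧ T.graph.IsAcyclic ∧
  (∀ x ∈ T.verts, Relation.ReflTransGen T.E v x) ∧
  (∀ x ∈ T.verts, D.w x = 1 → (T.deg x = 1 ∧ x ≠ v) ∨ (T.verts = {v} ∧ x = v))

/-- A unicycle oriented subgraph whose (unique) cycle has vertex set `Cs`. -/
def IsUnicycle (D : WOGraph V) (B : D.OSub) (Cs : Set V) : Prop :=
  (∃ (n : ℕ) (f : ZMod n → V), 3 ≤ n ∧ Function.Injective f ∧ Set.range f = Cs ∧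
      ∀ i, B.E (f i) (f (i + 1))) ∧
  (∀ (a : V) (p : B.graph.Walk a a), p.IsCycle → {x | x ∈ p.support} = Cs) ∧
  (∀ y ∈ B.verts, y ∉ Cs → ∃ x ∈ Cs, Relation.ReflTransGen B.E x y) ∧
  (∀ x ∈ B.verts, D.w x = 1 → B.deg x = 1)

/-- A `⋆`-semi-forest structure on a weighted oriented subgraph `H` of `D`. -/
structure SSF (D : WOGraph V) (H : D.OSub) where
  r : ℕ
  s : ℕ
  T : Fin r → D.OSub
  parent : Fin r → V
  B : Fin s → D.OSub
  Cs : Fin s → Set V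
  hT : ∀ i, D.IsROT (T i) (parent i)
  hB : ∀ j, D.IsUnicycle (B j) (Cs j)
  hverts : H.verts = (⋃ i, (T i).verts) ∪ (⋃ j, (B j).verts)
  hE : ∀ u v, H.E u v ↔ ((∃ i, (T i).E u v) ∨ (∃ j, (B j).E u v))
  hTT : ∀ i i', i ≠ i' → Disjoint (T i).verts (T i').verts
  hBB : ∀ j j', j ≠ j' → Disjoint (B j).verts (B j').verts
  hTB : ∀ i j, Disjoint (T i).verts (B j).verts
  wv : Fin r → V
  hwv_not : ∀ i, wv i ∉ H.verts
  hwv_nbr : ∀ i, wv i ∈ D.nbr (parent i)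
  W1 : Set V
  W2 : Set V
  hW_union : W1 ∪ W2 = Set.range wv
  hW_disj : Disjoint W1 W2
  hW1_stable : ∀ x ∈ W1, ∀ y ∈ W1, ¬ D.graph.Adj x y
  hW2_plus : W2 ⊆ D.Vplus
  hW2_edge : ∀ i, wv i ∈ W2 → D.E (wv i) (parent i)
  hW1_out : D.outNS (W2 ∪ ({x | x ∈ H.verts ∧ 2 ≤ H.deg x} ∪
      {x | (∃ i, parent i = x) ∧ H.deg x = 1})) ∩ W1 = ∅

/-- The set `H̃` associated with a `⋆`-semi-forest. -/
noncomputable def SSF.tilde {D : WOGraph V} {H : D.OSub} (F : D.SSF H) : Set V :=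
  {x | x ∈ H.verts ∧ 2 ≤ H.deg x} ∪ {x | (∃ i, F.parent i = x) ∧ H.deg x = 1}

/-- `K` has a generating `⋆`-semi-forest. -/
def HasGenSSF (D : WOGraph V) (K : D.OSub) : Prop :=
  ∃ H : D.OSub, Nonempty (D.SSF H) ∧ H.verts = K.verts

/-- The `⋆`-condition for a 5-tuple `(a', a, b, b', c)` written along an induced 5-cycle. -/
def StarCond (D : WOGraph V) (a' a b b' c : V) : Prop :=
  (D.E a' a ∧ D.w a' = 1) ∧
  (D.inN a ⊆ D.nbr c ∧ D.inN a ∩ D.Vplus ⊆ D.inN c) ∧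
  (D.nbr b' ⊆ D.nbr a' ∪ D.outN a ∧ D.inN b' ∩ D.Vplus ⊆ D.inN a')

/-- The `⋆`-property for an induced 5-cycle `z 0, z 1, z 2, z 3, z 4`. -/
def HasStarProp (D : WOGraph V) (z : Fin 5 → V) : Prop :=
  ∀ i : Fin 5,
    (D.E (z i) (z (i + 1)) ∧ 1 < D.w (z i) →
      StarCond D (z (i - 1)) (z i) (z (i + 1)) (z (i + 2)) (z (i + 3))) ∧
    (D.E (z (i + 1)) (z i) ∧ 1 < D.w (z (i + 1)) →
      StarCond D (z (i + 2)) (z (i + 1)) (z i) (z (i - 1)) (z (i - 2)))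

/-- The edge ideal `I(D)` of a weighted oriented graph in `k[x_v : v ∈ V]`. -/
noncomputable def edgeIdeal (k : Type) [Field k] (D : WOGraph V) : Ideal (MvPolynomial V k) :=
  Ideal.span {f | ∃ u v, D.E u v ∧ f = MvPolynomial.X u * MvPolynomial.X v ^ D.w v}

end WOGraph

/-! ## Generic graph notions -/

/-- A vertex cover of a simple graph. -/
def gVC {W : Type} (G : SimpleGraph W) (C : Set W) : Prop :=
  ∀ u v, G.Adj u v → u ∈ C ∨ v ∈ C

/-- The vertex cover number `τ(G)`. -/
noncomputable def tau {W : Type} (G : SimpleGraph W) : ℕ :=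
  sInf {n | ∃ C : Set W, gVC G C ∧ C.ncard = n}

/-- A stable (independent) set. -/
def Stable {W : Type} (G : SimpleGraph W) (S : Set W) : Prop :=
  ∀ x ∈ S, ∀ y ∈ S, ¬ G.Adj x y

/-- `G` is well-covered: all maximal stable sets have the same cardinality. -/
def WellCovered {W : Type} (G : SimpleGraph W) : Prop :=
  ∀ S T : Set W, Maximal (Stable G) S → Maximal (Stable G) T → S.ncard = T.ncard

/-- `e` is (the vertex set of) an edge of `G`. -/
def IsEdgeSet {W : Type} (G : SimpleGraph W) (e : Set W) : Prop :=
  ∃ u v, G.Adj u v ∧ e = {u, v}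

/-- An edge `e = {b, b'}` has the property (P). -/
def PropP {W : Type} (G : SimpleGraph W) (e : Set W) : Prop :=
  ∀ a b a' b', e = {b, b'} → G.Adj a b → G.Adj a' b' → a ∉ e → a' ∉ e → G.Adj a a'

/-- A matching of `G`, as a set of (vertex sets of) edges. -/
def IsMatchingSet {W : Type} (G : SimpleGraph W) (M : Set (Set W)) : Prop :=
  (∀ e ∈ M, IsEdgeSet G e) ∧ M.Pairwise Disjoint

/-- A perfect matching of `G`. -/
def IsPerfectMatchingSet {W : Type} (G : SimpleGraph W) (M : Set (Set W)) : Prop :=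
  IsMatchingSet G M ∧ ⋃₀ M = Set.univ

/-- The matching number `ν(G)`. -/
noncomputable def nu {W : Type} (G : SimpleGraph W) : ℕ :=
  sSup {n | ∃ M, IsMatchingSet G M ∧ M.ncard = n}

/-- The degree of a vertex. -/
noncomputable def gdeg {W : Type} (G : SimpleGraph W) (x : W) : ℕ := (G.neighborSet x).ncard

/-- `v` is a simplicial vertex: its closed neighbourhood is a clique. -/
def IsSimplicialVtx {W : Type} (G : SimpleGraph W) (v : W) : Prop :=
  G.IsClique (insert v (G.neighborSet v))

/-- The set `S_G` of (vertex sets of) simplexes of `G`. -/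
def SimplexSets {W : Type} (G : SimpleGraph W) : Set (Set W) :=
  {S | ∃ v, IsSimplicialVtx G v ∧ S = insert v (G.neighborSet v)}

/-- `G` is a simplicial graph. -/
def SimplicialGraph {W : Type} (G : SimpleGraph W) : Prop :=
  ∀ v, IsSimplicialVtx G v ∨ ∃ u, G.Adj v u ∧ IsSimplicialVtx G u

/-- The cycle graph on `ZMod n`. -/
def cycGraph (n : ℕ) : SimpleGraph (ZMod n) := SimpleGraph.fromRel (fun i j => j = i + 1)

/-- `G` is chordal: it has no induced cycles of length `≥ 4`. -/
def Chordal {W : Type} (G : SimpleGraph W) : Prop :=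
  ∀ n : ℕ, 4 ≤ n → ∀ A : Set W, IsEmpty (G.induce A ≃g cycGraph n)

/-- `G` has a cycle of length `k`. -/
def HasCycleLen {W : Type} (G : SimpleGraph W) (k : ℕ) : Prop :=
  ∃ (a : W) (p : G.Walk a a), p.IsCycle ∧ p.length = k

/-- `z 0, z 1, z 2, z 3, z 4` is an induced 5-cycle of `G`. -/
def IsInduced5Cycle {W : Type} (G : SimpleGraph W) (z : Fin 5 → W) : Prop :=
  Function.Injective z ∧ ∀ i j : Fin 5, G.Adj (z i) (z j) ↔ (j = i + 1 ∨ i = j + 1)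

/-- A basic 5-cycle: an induced 5-cycle without two adjacent vertices of degree `≥ 3`. -/
def IsBasic5Cycle {W : Type} (G : SimpleGraph W) (z : Fin 5 → W) : Prop :=
  IsInduced5Cycle G z ∧ ∀ i : Fin 5, ¬ (3 ≤ gdeg G (z i) ∧ 3 ≤ gdeg G (z (i + 1)))

/-- The set `C_G` of (vertex sets of) basic 5-cycles of `G`. -/
def Basic5Sets {W : Type} (G : SimpleGraph W) : Set (Set W) :=
  {A | ∃ z : Fin 5 → W, IsBasic5Cycle G z ∧ A = Set.range z}

/-- The clique number `ω(G)`. -/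
noncomputable def cliqueNum' {W : Type} (G : SimpleGraph W) : ℕ :=
  sSup {n | ∃ s : Set W, G.IsClique s ∧ s.ncard = n}

/-- `G` is a perfect graph. -/
def IsPerfectGraph {W : Type} (G : SimpleGraph W) : Prop :=
  ∀ A : Set W, (G.induce A).chromaticNumber = (cliqueNum' (G.induce A) : ℕ∞)

/-- A `τ`-reduction of `G` into the induced subgraphs on the `A i`. -/
noncomputable def TauReduction {W : Type} (G : SimpleGraph W) (s : ℕ) (A : Fin s → Set W) : Prop :=
  (∀ i j, i ≠ j → Disjoint (A i) (A j)) ∧ (⋃ i, A i) = Set.univ ∧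
  tau G = ∑ i, tau (G.induce (A i))

/-- `G` is an SCQ graph witnessed by the matching `Q`. -/
def IsSCQ {V : Type} (D : WOGraph V) (Q : Set (Set V)) : Prop :=
  (Q = ∅ ∨ (IsMatchingSet D.graph Q ∧ ∀ e ∈ Q, PropP D.graph e)) ∧
  (∀ A ∈ SimplexSets D.graph ∪ Basic5Sets D.graph ∪ Q,
    ∀ B ∈ SimplexSets D.graph ∪ Basic5Sets D.graph ∪ Q, A = B ∨ Disjoint A B) ∧
  ⋃₀ (SimplexSets D.graph ∪ Basic5Sets D.graph ∪ Q) = Set.univ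

/-- An ideal is unmixed if all its associated primes have the same height. -/
def IsUnmixed {R : Type} [CommRing R] (I : Ideal R) : Prop :=
  ∀ p q : Ideal R, p ∈ associatedPrimes R (R ⧸ I) → q ∈ associatedPrimes R (R ⧸ I) →
    ∀ (hp : p.IsPrime) (hq : q.IsPrime),
      Order.height (⟨p, hp⟩ : PrimeSpectrum R) = Order.height (⟨q, hq⟩ : PrimeSpectrum R)
/-! ## Concrete graphs -/

/-- The 7-cycle `C₇`. -/
def C7graph : SimpleGraph (ZMod 7) := cycGraph 7

/-- Vertices of `T₁₀`. -/
inductive T10V | v | a1 | a2 | a3 | b1 | b2 | b3 | c1 | c2 | c3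
deriving DecidableEq

instance instFintypeT10V : Fintype T10V :=
  Fintype.ofList ([.v, .a1, .a2, .a3, .b1, .b2, .b3, .c1, .c2, .c3] : List T10V) (by intro x; cases x <;> decide)

open T10V in
/-- The graph `T₁₀`. -/
def T10graph : SimpleGraph T10V := SimpleGraph.fromRel (fun x y =>
  (x, y) ∈ ([(v,a1), (v,a2), (v,a3), (a1,b1), (a2,b2), (a3,b3), (b1,c1), (b2,c2),
    (b3,c3), (c1,c2), (c2,c3), (c3,c1)] : List (T10V × T10V)))

/-- Vertices of `Q₁₃`. -/
inductive Q13V | a1 | a2 | b1 | b2 | c1 | c2 | d1 | d2 | g1 | g2 | h | h' | v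
deriving DecidableEq

instance instFintypeQ13V : Fintype Q13V :=
  Fintype.ofList ([.a1, .a2, .b1, .b2, .c1, .c2, .d1, .d2, .g1, .g2, .h, .h', .v] : List Q13V) (by intro x; cases x <;> decide)

open Q13V in
/-- The graph `Q₁₃`. -/
def Q13graph : SimpleGraph Q13V := SimpleGraph.fromRel (fun x y =>
  (x, y) ∈ ([(a1,a2), (a1,d1), (a2,d2), (d1,c1), (d1,g1), (d1,h), (d2,c2), (d2,g2),
    (d2,h), (g1,b1), (g1,h'), (g2,b2), (g2,h'), (b1,c2), (b2,c1), (h,v),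
    (h',v)] : List (Q13V × Q13V)))

/-- Vertices of `P₁₃`. -/
inductive P13V | a1 | a2 | a3 | a4 | b1 | b2 | b3 | b4 | c1 | c2 | d1 | d2 | v
deriving DecidableEq

instance instFintypeP13V : Fintype P13V :=
  Fintype.ofList ([.a1, .a2, .a3, .a4, .b1, .b2, .b3, .b4, .c1, .c2, .d1, .d2, .v] : List P13V) (by intro x; cases x <;> decide)

open P13V in
/-- The graph `P₁₃`. -/
def P13graph : SimpleGraph P13V := SimpleGraph.fromRel (fun x y =>
  (x, y) ∈ ([(a1,a2), (a1,b1), (a2,b2), (a3,a4), (a3,b3), (a4,b4), (b1,c1), (b2,c1),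
    (b3,c2), (b4,c2), (c1,c2), (d1,b1), (d1,b3), (d2,b2), (d2,b4), (v,d1),
    (v,d2)] : List (P13V × P13V)))

/-- Vertices of `P₁₄`. -/
inductive P14V | a1 | a2 | a3 | a4 | a5 | a6 | a7 | b1 | b2 | b3 | b4 | b5 | b6 | b7
deriving DecidableEq

instance instFintypeP14V : Fintype P14V :=
  Fintype.ofList ([.a1, .a2, .a3, .a4, .a5, .a6, .a7, .b1, .b2, .b3, .b4, .b5, .b6, .b7] : List P14V) (by intro x; cases x <;> decide)

open P14V in
/-- The graph `P₁₄`. -/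
def P14graph : SimpleGraph P14V := SimpleGraph.fromRel (fun x y =>
  (x, y) ∈ ([(a1,a2), (a2,a3), (a3,a4), (a4,a5), (a5,a6), (a6,a7), (a7,a1),
    (a1,b1), (a2,b2), (a3,b3), (a4,b4), (a5,b5), (a6,b6), (a7,b7),
    (b1,b3), (b2,b4), (b3,b5), (b4,b6), (b5,b7), (b6,b1), (b7,b2)] : List (P14V × P14V)))

/-- Vertices of `P₁₀`. -/
inductive P10V | a1 | a2 | b1 | b2 | c1 | c2 | d1 | d2 | g1 | g2
deriving DecidableEq

instance instFintypeP10V : Fintype P10V :=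
  Fintype.ofList ([.a1, .a2, .b1, .b2, .c1, .c2, .d1, .d2, .g1, .g2] : List P10V) (by intro x; cases x <;> decide)

open P10V in
/-- The graph `P₁₀`. -/
def P10graph : SimpleGraph P10V := SimpleGraph.fromRel (fun x y =>
  (x, y) ∈ ([(a1,b1), (b1,d2), (d2,d1), (d1,b2), (b2,a2), (a1,g1), (g1,d1), (g1,c1),
    (c1,c2), (c2,g2), (g2,a2), (d2,g2)] : List (P10V × P10V)))
/-!
By the dihedral symmetries of the `5`-cycle (`cycleFrame`), it suffices to treat each
configuration at fixed positions of the cycle.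

If the `⋆`-property holds and `C` is a strong vertex cover, `C` meets the cycle in at least three
vertices. If it contained four or five of them, then, the cycle being basic, some cycle vertex of
degree `2` would have both neighbours in `C` and hence lie in `L₃(C)`; the `⋆`-conditions at the
arc from its heavy in-neighbour lead to a contradiction.

Conversely, a failure of a `⋆`-condition at a heavy arc `z 0 → z 1` yields a set `Y` of heavy
vertices and a stable set `P` disjoint from `N⁺(Y)` such that `N⁺(Y) ∪ N(P)` contains four cycle
vertices. The complement of a maximal stable set containing `P` and avoiding `N⁺(Y)` is then a
strong vertex cover containing these four vertices: a vertex of its `L₃` lies in `N⁺(Y)`, and its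
in-neighbour in `Y` has all its out-neighbours in the cover.
-/

open Fin.CommRing Finset

lemma fin5_eq_one_or_eq_neg_one {d : Fin 5} (hd : d * d = 1) : d = 1 ∨ d = -1 := by
  revert d; decide

lemma fin5_cover_cases (F : Finset (Fin 5)) (h : ∀ i, i ∈ F ∨ i + 1 ∈ F) :
    #F = 3 ∨ (∃ k, ∀ j, j ∈ F ↔ j ≠ k) ∨ ∀ j, j ∈ F := by
  revert F; decide

lemma fin5_exists_consecutive_notMem (F : Finset (Fin 5)) (h : ∀ i, i ∈ F → i + 1 ∉ F) :
    ∃ i, i ∉ F ∧ i + 1 ∉ F := by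
  revert F; decide

lemma ncard_inter_range_eq_card {V : Type} {z : Fin 5 → V} (hz : Function.Injective z)
    (C : Set V) [DecidablePred (· ∈ C)] : (C ∩ Set.range z).ncard = #{j | z j ∈ C} := by
  rw [← Set.ncard_preimage_of_injective_subset_range hz Set.inter_subset_right,
    ← Set.ncard_coe_finset]
  congr 1
  ext j
  simp

lemma four_le_ncard_inter_range {V : Type} {z : Fin 5 → V} (hz : Function.Injective z)
    {C : Set V} {m : Fin 5} (h : ∀ j, j ≠ m → z j ∈ C) : 4 ≤ (C ∩ Set.range z).ncard := by
  classical
  rw [ncard_inter_range_eq_card hz]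
  calc 4 = #(univ.erase m) := by simp
    _ ≤ _ := card_le_card fun j hj => by simpa using h j (ne_of_mem_erase hj)

/-- For `d * d = 1`, i.e. `d = ±1`, this is the cycle `z` rotated to start at `z i` and read
forwards (`d = 1`) or backwards (`d = -1`). -/
def cycleFrame {W : Type} (z : Fin 5 → W) (i d : Fin 5) : Fin 5 → W := fun j => z (i + d * j)

lemma cycleFrame_cycleFrame {W : Type} (z : Fin 5 → W) (i d i' d' : Fin 5) :
    cycleFrame (cycleFrame z i d) i' d' = cycleFrame z (i + d * i') (d * d') := by
  funext j
  simp only [cycleFrame]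
  ring_nf

lemma range_cycleFrame {W : Type} (z : Fin 5 → W) (i : Fin 5) {d : Fin 5} (hd : d * d = 1) :
    Set.range (cycleFrame z i d) = Set.range z := by
  refine (Set.range_comp_subset_range _ z).antisymm fun x ⟨j, hj⟩ => ⟨d * (j - i), ?_⟩
  rw [← hj]
  change z (i + d * (d * (j - i))) = z j
  rw [← mul_assoc, hd, one_mul, add_sub_cancel]

section SimpleGraph

variable {W : Type} {G : SimpleGraph W} {z : Fin 5 → W}

lemma three_le_gdeg [Fintype W] {x a b c : W} (hab : a ≠ b) (hac : a ≠ c) (hbc : b ≠ c)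
    (ha : G.Adj x a) (hb : G.Adj x b) (hc : G.Adj x c) : 3 ≤ gdeg G x :=
  (Set.two_lt_ncard_iff).2 ⟨a, b, c, ha, hb, hc, hab, hac, hbc⟩

lemma stable_singleton (G : SimpleGraph W) (x : W) : Stable G {x} := by
  rintro _ rfl _ rfl
  exact G.loopless.irrefl _

lemma stable_pair {x y : W} (h : ¬ G.Adj x y) : Stable G {x, y} := by
  rintro a (rfl | rfl) b (rfl | rfl)
  exacts [G.loopless.irrefl _, h, fun h' => h h'.symm, G.loopless.irrefl _]

namespace IsInduced5Cycle

lemma adj (hz : IsInduced5Cycle G z) {i j : Fin 5} (h : j = i + 1 ∨ i = j + 1) :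
    G.Adj (z i) (z j) :=
  (hz.2 i j).2 h

lemma not_adj (hz : IsInduced5Cycle G z) {i j : Fin 5} (h : ¬ (j = i + 1 ∨ i = j + 1)) :
    ¬ G.Adj (z i) (z j) :=
  mt (hz.2 i j).1 h

lemma eq_or_eq_of_adj [Fintype W] (hz : IsInduced5Cycle G z) (a b : Fin 5) {i : Fin 5}
    (ha : a + 1 = i) (hb : i + 1 = b) (hdeg : gdeg G (z i) ≤ 2) {y : W} (hy : G.Adj (z i) y) :
    y = z a ∨ y = z b := by
  subst ha hb
  have hab : z a ≠ z (a + 1 + 1) := hz.1.ne (by grind)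
  have hsub : {z a, z (a + 1 + 1)} ⊆ G.neighborSet (z (a + 1)) := by
    rintro _ (rfl | rfl)
    exacts [hz.adj (Or.inr rfl), hz.adj (Or.inl rfl)]
  have heq := Set.eq_of_subset_of_ncard_le hsub (by rwa [Set.ncard_pair hab])
  exact heq.symm.subset hy

lemma cycleFrame (hz : IsInduced5Cycle G z) (i : Fin 5) {d : Fin 5} (hd : d * d = 1) :
    IsInduced5Cycle G (cycleFrame z i d) := by
  refine ⟨fun j j' h => ?_, fun j j' => ?_⟩
  · simpa [← mul_assoc, hd] using congrArg (d * ·) (add_left_cancel (hz.1 h))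
  · simp only [_root_.cycleFrame, hz.2, add_assoc, add_right_inj]
    clear hz
    revert d j j'
    decide

end IsInduced5Cycle

lemma IsBasic5Cycle.cycleFrame (hz : IsBasic5Cycle G z) (i : Fin 5) {d : Fin 5}
    (hd : d * d = 1) : IsBasic5Cycle G (cycleFrame z i d) := by
  refine ⟨hz.1.cycleFrame i hd, fun j => ?_⟩
  rcases fin5_eq_one_or_eq_neg_one hd with rfl | rfl
  · simpa [_root_.cycleFrame, add_assoc] using hz.2 (i + j)
  · have h := hz.2 (i + -1 * (j + 1))
    simp only [_root_.cycleFrame]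
    rwa [show i + -1 * (j + 1) + 1 = i + -1 * j by ring, and_comm] at h

end SimpleGraph

namespace WOGraph

variable {V : Type} {D : WOGraph V} {z : Fin 5 → V}

lemma mem_nbr_comm {x y : V} : y ∈ D.nbr x ↔ x ∈ D.nbr y := Or.comm

lemma graph_adj_iff_mem_nbr {x y : V} : D.graph.Adj x y ↔ y ∈ D.nbr x := by
  simp only [graph, SimpleGraph.fromRel_adj, ne_eq]
  refine and_iff_right_of_imp ?_
  rintro h rfl
  rcases h with h | h <;> exact D.irrefl x h

lemma exists_E_of_one_lt_w {x : V} (h : 1 < D.w x) : ∃ y, D.E y x := by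
  by_contra! hx
  have := D.source_one x hx
  omega

lemma _root_.IsInduced5Cycle.mem_nbr (hz : IsInduced5Cycle D.graph z) {i j : Fin 5}
    (h : j = i + 1 ∨ i = j + 1) : z j ∈ D.nbr (z i) :=
  graph_adj_iff_mem_nbr.1 (hz.adj h)

lemma _root_.IsInduced5Cycle.not_E (hz : IsInduced5Cycle D.graph z) {i j : Fin 5}
    (h : ¬ (j = i + 1 ∨ i = j + 1)) : ¬ D.E (z i) (z j) :=
  fun hE => hz.not_adj h (graph_adj_iff_mem_nbr.2 (Or.inl hE))

lemma IsVC.mem_of_mem_nbr {C : Set V} (hC : D.IsVC C) {x y : V} (hy : y ∈ D.nbr x)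
    (hx : x ∉ C) : y ∈ C := by
  rcases hy with h | h
  · exact (hC _ _ h).resolve_left hx
  · exact (hC _ _ h).resolve_right hx

lemma mem_of_E_of_notMem_L1 {C : Set V} {x y : V} (hx : x ∈ C) (hL1 : x ∉ D.L1 C)
    (h : D.E x y) : y ∈ C := by
  by_contra hy
  exact hL1 ⟨hx, y, h, hy⟩

lemma mem_L3_of_nbr_subset {C : Set V} {x : V} (hx : x ∈ C) (h : D.nbr x ⊆ C) :
    x ∈ D.L3 C :=
  ⟨hx, fun ⟨_, _, hy, hyC⟩ => hyC (h (Or.inl hy)),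
    fun ⟨_, _, _, hy, hyC⟩ => hyC (h (Or.inr hy))⟩

lemma IsStrongVC.notMem_L3 {C : Set V} (hC : D.IsStrongVC C) {x c : V}
    (h : D.inN x ∩ D.Vplus ⊆ D.inN c) (hc : c ∉ C) : x ∉ D.L3 C := fun hx => by
  obtain ⟨y, hyx, hyC, hyL1, hyw⟩ := hC.2 x hx
  exact hc (mem_of_E_of_notMem_L1 hyC hyL1 (h ⟨hyx, hyw⟩))

def StarAtOrigin (D : WOGraph V) (w : Fin 5 → V) : Prop :=
  D.E (w 0) (w 1) → 1 < D.w (w 0) → D.StarCond (w 4) (w 0) (w 1) (w 2) (w 3)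

theorem hasStarProp_iff :
    D.HasStarProp z ↔ ∀ i d, d * d = 1 → D.StarAtOrigin (cycleFrame z i d) := by
  simp only [StarAtOrigin, cycleFrame]
  constructor
  · intro h i d hd hE hw
    rcases fin5_eq_one_or_eq_neg_one hd with rfl | rfl
    · convert (h i).1 ⟨by simpa using hE, by simpa using hw⟩ using 2 <;> grind
    · convert (h (i - 1)).2 ⟨by convert hE using 2 <;> grind, by convert hw using 3; grind⟩
        using 2 <;> grind
  · intro h i
    constructor
    · rintro ⟨hE, hw⟩
      convert h i 1 (by decide) (by simpa using hE) (by simpa using hw) using 2 <;> grind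
    · rintro ⟨hE, hw⟩
      convert h (i + 1) (-1) (by decide) (by convert hE using 2 <;> grind)
        (by convert hw using 3; grind) using 2 <;> grind

lemma HasStarProp.cycleFrame (h : D.HasStarProp z) (i : Fin 5) {d : Fin 5} (hd : d * d = 1) :
    D.HasStarProp (cycleFrame z i d) :=
  hasStarProp_iff.2 fun i' d' hd' => by
    rw [cycleFrame_cycleFrame]
    exact hasStarProp_iff.1 h _ _ (by linear_combination (d' * d') * hd + hd')

def StrongVCMeetsFour (D : WOGraph V) (z : Fin 5 → V) : Prop :=
  ∃ C, D.IsStrongVC C ∧ 4 ≤ (C ∩ Set.range z).ncard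

lemma strongVCMeetsFour_cycleFrame (i : Fin 5) {d : Fin 5} (hd : d * d = 1) :
    D.StrongVCMeetsFour (cycleFrame z i d) ↔ D.StrongVCMeetsFour z := by
  simp only [StrongVCMeetsFour, range_cycleFrame z i hd]

variable [Fintype V]

theorem exists_isStrongVC_of_disjoint_outNS {Y P : Set V} (hY : Y ⊆ D.Vplus)
    (hP : Stable D.graph P) (hPY : Disjoint P (D.outNS Y)) :
    ∃ C, D.IsStrongVC C ∧ D.outNS Y ∪ D.nbrS P ⊆ C := by
  obtain ⟨S, hPS, hS⟩ := Finite.exists_le_maximal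
    (p := fun S : Set V => Stable D.graph S ∧ Disjoint S (D.outNS Y)) ⟨hP, hPY⟩
  have hmax : ∀ x, x ∉ D.outNS Y → (∀ s ∈ S, ¬ D.graph.Adj x s) → x ∈ S := by
    intro x hxY hx
    refine hS.2 ⟨?_, Set.disjoint_insert_left.2 ⟨hxY, hS.1.2⟩⟩ (Set.subset_insert x S)
      (Set.mem_insert x S)
    rintro a (rfl | ha) b (rfl | hb)
    · exact D.graph.loopless.irrefl _
    · exact hx b hb
    · exact fun h => hx a ha h.symm
    · exact hS.1.1 a ha b hb
  have hvc : D.IsVC Sᶜ := by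
    intro u v huv
    by_contra! h
    exact hS.1.1 u (not_not.1 h.1) v (not_not.1 h.2) (graph_adj_iff_mem_nbr.2 (Or.inl huv))
  refine ⟨Sᶜ, ⟨hvc, fun x hx => ?_⟩, Set.union_subset ?_ ?_⟩
  · have hnbr : D.nbr x ⊆ Sᶜ := fun y hy => by
      rcases hy with h | h
      · exact mem_of_E_of_notMem_L1 hx.1 hx.2.1 h
      · by_contra hyS
        exact hx.2.2 ⟨hx.1, hx.2.1, y, h, hyS⟩
    obtain ⟨y, hyY, hyx⟩ : x ∈ D.outNS Y := by
      by_contra hxY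
      exact hx.1 (hmax x hxY fun s hs h => hnbr (graph_adj_iff_mem_nbr.1 h) hs)
    refine ⟨y, hyx, hnbr (Or.inr hyx), fun ⟨_, t, hyt, htS⟩ => htS ?_, hY hyY⟩
    exact Set.disjoint_right.1 hS.1.2 ⟨y, hyY, hyt⟩
  · exact fun y hy hyS => Set.disjoint_left.1 hS.1.2 hyS hy
  · rintro y ⟨p, hp, hpy⟩ hyS
    exact hS.1.1 p (hPS hp) y hyS (graph_adj_iff_mem_nbr.2 hpy)

theorem strongVCMeetsFour_of_forall_ne (hz : Function.Injective z) {Y P : Set V}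
    (hY : Y ⊆ D.Vplus) (hP : Stable D.graph P) (hPY : Disjoint P (D.outNS Y)) (m : Fin 5)
    (hcov : ∀ j, j ≠ m → z j ∈ D.outNS Y ∪ D.nbrS P) : D.StrongVCMeetsFour z := by
  obtain ⟨C, hC, hsub⟩ := exists_isStrongVC_of_disjoint_outNS hY hP hPY
  exact ⟨C, hC, four_le_ncard_inter_range hz fun j hj => hsub (hcov j hj)⟩

section HasStarProp

variable {C : Set V}

theorem not_forall_mem_of_hasStarProp (hz : IsInduced5Cycle D.graph z)
    (hstar : D.HasStarProp z) (hC : D.IsStrongVC C) (hd0 : gdeg D.graph (z 0) ≤ 2)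
    (hd1 : gdeg D.graph (z 1) ≤ 2) : ¬ ∀ j, z j ∈ C := by
  intro hzC
  have hnbr : ∀ a b {i : Fin 5}, a + 1 = i → i + 1 = b → gdeg D.graph (z i) ≤ 2 →
      ∀ {y}, y ∈ D.nbr (z i) → y = z a ∨ y = z b :=
    fun a b _ ha hb hd _ hy => hz.eq_or_eq_of_adj a b ha hb hd (graph_adj_iff_mem_nbr.2 hy)
  have hL3 : ∀ a b {i : Fin 5}, a + 1 = i → i + 1 = b → gdeg D.graph (z i) ≤ 2 →
      z i ∈ D.L3 C := fun a b _ ha hb hd =>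
    mem_L3_of_nbr_subset (hzC _) fun y hy => by
      rcases hnbr a b ha hb hd hy with rfl | rfl <;> exact hzC _
  obtain ⟨y, hy0, -, -, hyw⟩ := hC.2 _ (hL3 4 1 (by decide) (by decide) hd0)
  obtain ⟨y', hy'1, -, -, hy'w⟩ := hC.2 _ (hL3 0 2 (by decide) (by decide) hd1)
  rcases hnbr 4 1 (by decide) (by decide) hd0 (Or.inr hy0) with rfl | rfl <;>
    rcases hnbr 0 2 (by decide) (by decide) hd1 (Or.inr hy'1) with rfl | rfl
  · have hs : D.StarCond (z 4) (z 0) (z 1) (z 2) (z 3) := (hstar 0).1 ⟨hy'1, hy'w⟩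
    exact hyw.ne' hs.1.2
  · have hs : D.StarCond (z 3) (z 4) (z 0) (z 1) (z 2) := (hstar 4).1 ⟨hy0, hyw⟩
    have hs' : D.StarCond (z 3) (z 2) (z 1) (z 0) (z 4) := (hstar 1).2 ⟨hy'1, hy'w⟩
    exact D.asymm _ _ (hs.2.2.2 ⟨hy'1, hy'w⟩) hs'.1.1
  · exact D.asymm _ _ hy0 hy'1
  · have hs : D.StarCond (z 2) (z 1) (z 0) (z 4) (z 3) := (hstar 0).2 ⟨hy0, hyw⟩
    exact hy'w.ne' hs.1.2

theorem not_forall_mem_iff_ne_zero_of_hasStarProp (hz : IsInduced5Cycle D.graph z)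
    (hstar : D.HasStarProp z) (hC : D.IsStrongVC C) (hd3 : gdeg D.graph (z 3) ≤ 2) :
    ¬ ∀ j, z j ∈ C ↔ j ≠ 0 := by
  intro hzC
  have h0 : z 0 ∉ C := by simpa using hzC 0
  have hmem : ∀ j, j ≠ 0 → z j ∈ C := fun j => (hzC j).2
  have hnbr : ∀ {y}, y ∈ D.nbr (z 3) → y = z 2 ∨ y = z 4 := fun hy =>
    hz.eq_or_eq_of_adj 2 4 (by decide) (by decide) hd3 (graph_adj_iff_mem_nbr.2 hy)
  obtain ⟨y, hy3, hyC, hyL1, hyw⟩ := hC.2 (z 3) <| mem_L3_of_nbr_subset (hmem 3 (by decide))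
    fun v hv => by rcases hnbr hv with rfl | rfl <;> exact hmem _ (by decide)
  rcases hnbr (Or.inr hy3) with rfl | rfl
  · have hs : D.StarCond (z 1) (z 2) (z 3) (z 4) (z 0) := (hstar 2).1 ⟨hy3, hyw⟩
    refine hC.notMem_L3 hs.2.1.2 h0 (mem_L3_of_nbr_subset hyC fun v hv => ?_)
    rcases hv with hv | hv
    · exact mem_of_E_of_notMem_L1 hyC hyL1 hv
    · exact hC.1.mem_of_mem_nbr (hs.2.1.1 hv) h0
  · have hs : D.StarCond (z 0) (z 4) (z 3) (z 2) (z 1) := (hstar 3).2 ⟨hy3, hyw⟩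
    refine hC.notMem_L3 hs.2.2.2 h0 (mem_L3_of_nbr_subset (hmem 2 (by decide)) fun v hv => ?_)
    rcases hs.2.2.1 hv with hv | hv
    · exact hC.1.mem_of_mem_nbr hv h0
    · exact mem_of_E_of_notMem_L1 hyC hyL1 hv

theorem ncard_inter_range_eq_three_of_hasStarProp (hz : IsBasic5Cycle D.graph z)
    (hstar : D.HasStarProp z) (hC : D.IsStrongVC C) : (C ∩ Set.range z).ncard = 3 := by
  classical
  rw [ncard_inter_range_eq_card hz.1.1]
  have hcover : ∀ i, i ∈ ({j | z j ∈ C} : Finset _) ∨ i + 1 ∈ ({j | z j ∈ C} : Finset _) :=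
    fun i => by
      simp only [mem_filter, mem_univ, true_and]
      exact or_iff_not_imp_left.2 (hC.1.mem_of_mem_nbr (hz.1.mem_nbr (Or.inl rfl)))
  rcases fin5_cover_cases _ hcover with h3 | ⟨k, hk⟩ | hall
  · exact h3
  · exfalso
    simp only [mem_filter, mem_univ, true_and] at hk
    have hdeg : gdeg D.graph (z (k + 2)) ≤ 2 ∨ gdeg D.graph (z (k + 3)) ≤ 2 := by
      have := hz.2 (k + 2)
      rw [add_assoc, show (2 : Fin 5) + 1 = 3 from rfl] at this
      omega
    rcases hdeg with hd | hd
    · refine not_forall_mem_iff_ne_zero_of_hasStarProp (hz.1.cycleFrame k (d := -1) (by decide))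
        (hstar.cycleFrame k (by decide)) hC ?_ fun j => ?_
      · simpa [cycleFrame, show (-3 : Fin 5) = 2 from rfl] using hd
      · simp [cycleFrame, hk]
    · refine not_forall_mem_iff_ne_zero_of_hasStarProp (hz.1.cycleFrame k (d := 1) (by decide))
        (hstar.cycleFrame k (by decide)) hC ?_ fun j => ?_
      · simpa [cycleFrame] using hd
      · simp [cycleFrame, hk]
  · exfalso
    obtain ⟨j, hj, hj1⟩ := fin5_exists_consecutive_notMem {i | 3 ≤ gdeg D.graph (z i)}
      fun i hi hi1 => hz.2 i ⟨by simpa using hi, by simpa using hi1⟩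
    simp only [mem_filter, mem_univ, true_and, not_le] at hj hj1 hall
    exact not_forall_mem_of_hasStarProp (hz.1.cycleFrame j (d := 1) (by decide))
      (hstar.cycleFrame j (by decide)) hC (by simpa [cycleFrame] using Nat.le_of_lt_succ hj)
      (by simpa [cycleFrame] using Nat.le_of_lt_succ hj1) fun i => hall _

end HasStarProp

theorem strongVCMeetsFour_of_inN_zero (hz : IsInduced5Cycle D.graph z)
    (hE : D.E (z 0) (z 1)) (hw : 1 < D.w (z 0)) {u : V} (hu : D.E u (z 0))
    (hu3 : u ∉ D.nbr (z 3)) : D.StrongVCMeetsFour z := by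
  refine strongVCMeetsFour_of_forall_ne hz.1 (Y := {z 0}) (P := {z 3, u})
    (Set.singleton_subset_iff.2 hw) (stable_pair fun h => hu3 (graph_adj_iff_mem_nbr.1 h))
    (Set.disjoint_left.2 ?_) 3 fun j hj => ?_
  · rintro p (rfl | rfl) ⟨y, rfl, hyp⟩
    exacts [hz.not_E (by decide) hyp, D.asymm _ _ hu hyp]
  · fin_cases j <;> simp only [Fin.reduceFinMk, Fin.isValue, ne_eq, not_true_eq_false] at hj ⊢
    exacts [Or.inr ⟨u, by simp, Or.inl hu⟩, Or.inl ⟨z 0, rfl, hE⟩,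
      Or.inr ⟨z 3, by simp, hz.mem_nbr (by decide)⟩, Or.inr ⟨z 3, by simp, hz.mem_nbr (by decide)⟩]

theorem strongVCMeetsFour_of_heavy_inN_zero (hz : IsInduced5Cycle D.graph z)
    (hE : D.E (z 0) (z 1)) (hw : 1 < D.w (z 0)) {u : V} (hu : D.E u (z 0)) (huw : 1 < D.w u)
    (hu3 : ¬ D.E u (z 3)) : D.StrongVCMeetsFour z := by
  refine strongVCMeetsFour_of_forall_ne hz.1 (Y := {z 0, u}) (P := {z 3})
    (Set.insert_subset hw (Set.singleton_subset_iff.2 huw)) (stable_singleton _ _)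
    (Set.disjoint_left.2 ?_) 3 fun j hj => ?_
  · rintro p rfl ⟨y, rfl | rfl, hyp⟩
    exacts [hz.not_E (by decide) hyp, hu3 hyp]
  · fin_cases j <;> simp only [Fin.reduceFinMk, Fin.isValue, ne_eq, not_true_eq_false] at hj ⊢
    exacts [Or.inl ⟨u, by simp, hu⟩, Or.inl ⟨z 0, by simp, hE⟩,
      Or.inr ⟨z 3, rfl, hz.mem_nbr (by decide)⟩, Or.inr ⟨z 3, rfl, hz.mem_nbr (by decide)⟩]

/-- An in-neighbour `u` of `z 0` is not adjacent to both `z 2` and `z 3`, as these would then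
be adjacent vertices of degree `3`; up to reflection, `u ∉ N(z 3)`. -/
theorem strongVCMeetsFour_of_heavy_source (hz : IsBasic5Cycle D.graph z)
    (hE : D.E (z 0) (z 1)) (hE' : D.E (z 0) (z 4)) (hw : 1 < D.w (z 0)) :
    D.StrongVCMeetsFour z := by
  obtain ⟨u, hu⟩ := exists_E_of_one_lt_w hw
  by_cases hu3 : u ∈ D.nbr (z 3)
  · by_cases hu2 : u ∈ D.nbr (z 2)
    · have hu1 : z 1 ≠ u := fun h => D.asymm _ _ hE (h ▸ hu)
      have hu4 : z 4 ≠ u := fun h => D.asymm _ _ hE' (h ▸ hu)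
      have hu2' : z 2 ≠ u := fun h => hz.1.not_E (i := 2) (j := 0) (by decide) (h ▸ hu)
      have hu3' : z 3 ≠ u := fun h => hz.1.not_E (i := 3) (j := 0) (by decide) (h ▸ hu)
      exact (hz.2 2 ⟨three_le_gdeg (hz.1.1.ne (by decide)) hu1 hu3'
        (hz.1.adj (by decide)) (hz.1.adj (by decide)) (graph_adj_iff_mem_nbr.2 hu2),
        three_le_gdeg (hz.1.1.ne (by decide)) hu2' hu4
        (hz.1.adj (by decide)) (hz.1.adj (by decide)) (graph_adj_iff_mem_nbr.2 hu3)⟩).elim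
    · rw [← strongVCMeetsFour_cycleFrame 0 (d := -1) (by decide)]
      exact strongVCMeetsFour_of_inN_zero (hz.1.cycleFrame 0 (by decide)) hE' hw hu hu2
  · exact strongVCMeetsFour_of_inN_zero hz.1 hE hw hu hu3

theorem strongVCMeetsFour_of_nbr_two (hz : IsInduced5Cycle D.graph z)
    (hE : D.E (z 0) (z 1)) (hw : 1 < D.w (z 0)) (h40 : D.E (z 4) (z 0)) {u : V}
    (hu : u ∈ D.nbr (z 2)) (hu4 : u ∉ D.nbr (z 4)) (hu0 : ¬ D.E (z 0) u) :
    D.StrongVCMeetsFour z := by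
  refine strongVCMeetsFour_of_forall_ne hz.1 (Y := {z 0}) (P := {z 4, u})
    (Set.singleton_subset_iff.2 hw) (stable_pair fun h => hu4 (graph_adj_iff_mem_nbr.1 h))
    (Set.disjoint_left.2 ?_) 4 fun j hj => ?_
  · rintro p (rfl | rfl) ⟨y, rfl, hyp⟩
    exacts [D.asymm _ _ h40 hyp, hu0 hyp]
  · fin_cases j <;> simp only [Fin.reduceFinMk, Fin.isValue, ne_eq, not_true_eq_false] at hj ⊢
    exacts [Or.inr ⟨z 4, by simp, Or.inl h40⟩, Or.inl ⟨z 0, rfl, hE⟩,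
      Or.inr ⟨u, by simp, mem_nbr_comm.1 hu⟩, Or.inr ⟨z 4, by simp, hz.mem_nbr (by decide)⟩]

theorem strongVCMeetsFour_of_heavy_inN_two (hz : IsInduced5Cycle D.graph z)
    (hE : D.E (z 0) (z 1)) (hw : 1 < D.w (z 0)) (h40 : D.E (z 4) (z 0)) {u : V}
    (hu : D.E u (z 2)) (huw : 1 < D.w u) (hu4 : ¬ D.E u (z 4)) : D.StrongVCMeetsFour z := by
  refine strongVCMeetsFour_of_forall_ne hz.1 (Y := {z 0, u}) (P := {z 4})
    (Set.insert_subset hw (Set.singleton_subset_iff.2 huw)) (stable_singleton _ _)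
    (Set.disjoint_left.2 ?_) 4 fun j hj => ?_
  · rintro p rfl ⟨y, rfl | rfl, hyp⟩
    exacts [D.asymm _ _ h40 hyp, hu4 hyp]
  · fin_cases j <;> simp only [Fin.reduceFinMk, Fin.isValue, ne_eq, not_true_eq_false] at hj ⊢
    exacts [Or.inr ⟨z 4, rfl, Or.inl h40⟩, Or.inl ⟨z 0, by simp, hE⟩, Or.inl ⟨u, by simp, hu⟩,
      Or.inr ⟨z 4, rfl, hz.mem_nbr (by decide)⟩]

theorem starCond_of_not_strongVCMeetsFour (hz : IsBasic5Cycle D.graph z)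
    (hE : D.E (z 0) (z 1)) (hw : 1 < D.w (z 0)) (h4 : ¬ D.StrongVCMeetsFour z) :
    D.StarCond (z 4) (z 0) (z 1) (z 2) (z 3) := by
  have h40 : D.E (z 4) (z 0) :=
    (hz.1.mem_nbr (i := 0) (j := 4) (by decide)).resolve_left fun h04 =>
      h4 (strongVCMeetsFour_of_heavy_source hz hE h04 hw)
  refine ⟨⟨h40, ?_⟩, ⟨fun u hu => ?_, fun u hu => ?_⟩, fun u hu => ?_, fun u hu => ?_⟩
  · by_contra hw4
    have hw4 : 1 < D.w (z 4) := lt_of_le_of_ne (D.w_pos _) (Ne.symm hw4)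
    rcases hz.1.mem_nbr (i := 4) (j := 3) (by decide) with h43 | h34
    · rw [← strongVCMeetsFour_cycleFrame 4 (d := -1) (by decide)] at h4
      exact h4 (strongVCMeetsFour_of_heavy_source (hz.cycleFrame 4 (by decide)) h43 h40 hw4)
    · exact h4 (strongVCMeetsFour_of_heavy_inN_zero hz.1 hE hw h40 hw4 (D.asymm _ _ h34))
  · by_contra hu3
    exact h4 (strongVCMeetsFour_of_inN_zero hz.1 hE hw hu hu3)
  · by_contra hu3
    exact h4 (strongVCMeetsFour_of_heavy_inN_zero hz.1 hE hw hu.1 hu.2 hu3)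
  · by_contra hu'
    simp only [Set.mem_union, not_or] at hu'
    exact h4 (strongVCMeetsFour_of_nbr_two hz.1 hE hw h40 hu hu'.1 hu'.2)
  · by_contra hu4
    exact h4 (strongVCMeetsFour_of_heavy_inN_two hz.1 hE hw h40 hu.1 hu.2 hu4)

theorem hasStarProp_of_forall_ncard_eq_three (hz : IsBasic5Cycle D.graph z)
    (H3 : ∀ C, D.IsStrongVC C → (C ∩ Set.range z).ncard = 3) : D.HasStarProp z :=
  hasStarProp_iff.2 fun i _ hd hE hw =>
    starCond_of_not_strongVCMeetsFour (hz.cycleFrame i hd) hE hw fun ⟨C, hC, h4⟩ => by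
      rw [range_cycleFrame z i hd, H3 C hC] at h4
      omega

end WOGraph

/-- Proposition `Basic5Cycle-Equ`. -/
theorem stmt9 {V : Type} [Fintype V] (D : WOGraph V) (z : Fin 5 → V)
    (hz : IsBasic5Cycle D.graph z) :
    D.HasStarProp z ↔ ∀ C : Set V, D.IsStrongVC C → (C ∩ Set.range z).ncard = 3 :=
  ⟨fun hstar _ hC => D.ncard_inter_range_eq_three_of_hasStarProp hz hstar hC,
    D.hasStarProp_of_forall_ncard_eq_three hz⟩
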